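/- Let A be a covariant 4-tensor on an n-dimensional real inner product space with the pairwise symmetries A_{kijl} = A_{kjil} = A_{lijk}. Set R := P(A) where P(A)_{kijl} = (1/4)(A_{kijl} - A_{ikjl} - A_{kilj} + A_{iklj}), set T_{kijl} := (2/3)(R_{kijl} + R_{lijk}), and C := A - T. Then the tensor X defined by 2 X_{i,jkl} := C_{kijl} + C_{jikl} - C_{ijkl} is totally symmetric in its last three entries (j,k,l), and C_{kijl} = X_{i,jkl} + X_{j,ikl}. -/
import Mathlib


/-- The gauge part `C = A - T` of a pairwise-symmetric 4-tensor can be written as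
`C_{kijl} = X_{i,jkl} + X_{j,ikl}` with `X` totally symmetric in its last three entries. -/
theorem stmt_1 (n : ℕ) (A R T C X : Fin n → Fin n → Fin n → Fin n → ℝ)
    (hsym1 : ∀ k i j l, A k i j l = A k j i l)
    (hsym2 : ∀ k i j l, A k i j l = A l i j k)
    (hR : ∀ k i j l, R k i j l
        = (1/4 : ℝ) * (A k i j l - A i k j l - A k i l j + A i k l j))
    (hT : ∀ k i j l, T k i j l = (2/3 : ℝ) * (R k i j l + R l i j k))
    (hC : ∀ k i j l, C k i j l = A k i j l - T k i j l)
    (hX : ∀ i j k l, 2 * X i j k l = C k i j l + C j i k l - C i j k l) :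
    (∀ i j k l, X i j k l = X i k j l) ∧
    (∀ i j k l, X i j k l = X i j l k) ∧
    (∀ k i j l, C k i j l = X i j k l + X j i k l) := by
  have hCA : ∀ k i j l, C k i j l = A k i j l - (2/3 : ℝ) *
      ((1/4 : ℝ) * (A k i j l - A i k j l - A k i l j + A i k l j)
     + (1/4 : ℝ) * (A l i j k - A i l j k - A l i k j + A i l k j)) := by
    intro k i j l; rw [hC, hT, hR, hR]
  have hXA : ∀ i j k l, 2 * X i j k l = C k i j l + C j i k l - C i j k l := hX
  refine ⟨?_, ?_, ?_⟩
  · intro i j k l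
    have h1 := hXA i j k l; have h2 := hXA i k j l
    simp only [hCA] at h1 h2
    linarith [hsym1 i j k l,
      hsym2 i j k l,
      hsym1 i j l k,
      hsym2 i j l k,
      hsym1 i k j l,
      hsym2 i k j l,
      hsym1 i k l j,
      hsym2 i k l j,
      hsym1 i l j k,
      hsym2 i l j k,
      hsym1 i l k j,
      hsym2 i l k j,
      hsym1 j i k l,
      hsym2 j i k l,
      hsym1 j i l k,
      hsym2 j i l k,
      hsym1 j k i l,
      hsym2 j k i l,
      hsym1 j k l i,
      hsym2 j k l i,
      hsym1 j l i k,
      hsym2 j l i k,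
      hsym1 j l k i,
      hsym2 j l k i,
      hsym1 k i j l,
      hsym2 k i j l,
      hsym1 k i l j,
      hsym2 k i l j,
      hsym1 k j i l,
      hsym2 k j i l,
      hsym1 k j l i,
      hsym2 k j l i,
      hsym1 k l i j,
      hsym2 k l i j,
      hsym1 k l j i,
      hsym2 k l j i,
      hsym1 l i j k,
      hsym2 l i j k,
      hsym1 l i k j,
      hsym2 l i k j,
      hsym1 l j i k,
      hsym2 l j i k,
      hsym1 l j k i,
      hsym2 l j k i,
      hsym1 l k i j,
      hsym2 l k i j,
      hsym1 l k j i,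
      hsym2 l k j i]
  · intro i j k l
    have h1 := hXA i j k l; have h2 := hXA i j l k
    simp only [hCA] at h1 h2
    linarith [hsym1 i j k l,
      hsym2 i j k l,
      hsym1 i j l k,
      hsym2 i j l k,
      hsym1 i k j l,
      hsym2 i k j l,
      hsym1 i k l j,
      hsym2 i k l j,
      hsym1 i l j k,
      hsym2 i l j k,
      hsym1 i l k j,
      hsym2 i l k j,
      hsym1 j i k l,
      hsym2 j i k l,
      hsym1 j i l k,
      hsym2 j i l k,
      hsym1 j k i l,
      hsym2 j k i l,
      hsym1 j k l i,
      hsym2 j k l i,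
      hsym1 j l i k,
      hsym2 j l i k,
      hsym1 j l k i,
      hsym2 j l k i,
      hsym1 k i j l,
      hsym2 k i j l,
      hsym1 k i l j,
      hsym2 k i l j,
      hsym1 k j i l,
      hsym2 k j i l,
      hsym1 k j l i,
      hsym2 k j l i,
      hsym1 k l i j,
      hsym2 k l i j,
      hsym1 k l j i,
      hsym2 k l j i,
      hsym1 l i j k,
      hsym2 l i j k,
      hsym1 l i k j,
      hsym2 l i k j,
      hsym1 l j i k,
      hsym2 l j i k,
      hsym1 l j k i,
      hsym2 l j k i,
      hsym1 l k i j,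
      hsym2 l k i j,
      hsym1 l k j i,
      hsym2 l k j i]
  · intro k i j l
    have h1 := hXA i j k l; have h2 := hXA j i k l
    simp only [hCA] at h1 h2
    rw [hCA]
    linarith [hsym1 i j k l,
      hsym2 i j k l,
      hsym1 i j l k,
      hsym2 i j l k,
      hsym1 i k j l,
      hsym2 i k j l,
      hsym1 i k l j,
      hsym2 i k l j,
      hsym1 i l j k,
      hsym2 i l j k,
      hsym1 i l k j,
      hsym2 i l k j,
      hsym1 j i k l,
      hsym2 j i k l,
      hsym1 j i l k,
      hsym2 j i l k,
      hsym1 j k i l,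
      hsym2 j k i l,
      hsym1 j k l i,
      hsym2 j k l i,
      hsym1 j l i k,
      hsym2 j l i k,
      hsym1 j l k i,
      hsym2 j l k i,
      hsym1 k i j l,
      hsym2 k i j l,
      hsym1 k i l j,
      hsym2 k i l j,
      hsym1 k j i l,
      hsym2 k j i l,
      hsym1 k j l i,
      hsym2 k j l i,
      hsym1 k l i j,
      hsym2 k l i j,
      hsym1 k l j i,
      hsym2 k l j i,
      hsym1 l i j k,
      hsym2 l i j k,
      hsym1 l i k j,
      hsym2 l i k j,
      hsym1 l j i k,
      hsym2 l j i k,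
      hsym1 l j k i,
      hsym2 l j k i,
      hsym1 l k i j,
      hsym2 l k i j,
      hsym1 l k j i,
      hsym2 l k j i]
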